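/- arXiv:1908.11559 — 4 statements merged into one kernel-verified Lean document; each statement's English description precedes it below -/
import Mathlib

section
/- If Ψ and Φ are solutions of the third-order scalar ODE y''' − v₁ y' + v₂ y = 0 on an interval (with v₁, v₂ differentiable functions), then their Wronskian W(z) = Ψ(z)Φ'(z) − Ψ'(z)Φ(z) satisfies the formal adjoint equation −W''' + v₁ W' + (v₂ + v₁')W = 0. -/
/-- If Ψ and Φ solve y''' − v₁ y' + v₂ y = 0 on a set I, then their Wronskian
W = Ψ Φ' − Ψ' Φ solves the formal adjoint equation −W''' + v₁ W' + (v₂ + v₁') W = 0 on I. -/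
theorem wronskian_solves_adjoint
    (v₁ v₂ Ψ Φ : ℝ → ℂ) (I : Set ℝ) (hI : IsOpen I)
    (hv₁ : ContDiff ℝ (⊤ : ℕ∞) v₁) (hv₂ : ContDiff ℝ (⊤ : ℕ∞) v₂)
    (hΨ : ContDiff ℝ (⊤ : ℕ∞) Ψ) (hΦ : ContDiff ℝ (⊤ : ℕ∞) Φ)
    (hΨode : ∀ z ∈ I, iteratedDeriv 3 Ψ z - v₁ z * deriv Ψ z + v₂ z * Ψ z = 0)
    (hΦode : ∀ z ∈ I, iteratedDeriv 3 Φ z - v₁ z * deriv Φ z + v₂ z * Φ z = 0)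
    (W : ℝ → ℂ) (hW : W = fun z => Ψ z * deriv Φ z - deriv Ψ z * Φ z) :
    ∀ z ∈ I,
      -iteratedDeriv 3 W z + v₁ z * deriv W z + (v₂ z + deriv v₁ z) * W z = 0 := by
  have key : ∀ f : ℝ → ℂ, ContDiff ℝ (↑(⊤ : ℕ∞)) f → ContDiff ℝ (↑(⊤ : ℕ∞)) (deriv f) :=
    fun f hf => (contDiff_infty_iff_deriv.mp hf).2
  have hΨ0 : ContDiff ℝ (↑(⊤ : ℕ∞)) Ψ := hΨ.of_le (mod_cast le_top)
  have hΦ0 : ContDiff ℝ (↑(⊤ : ℕ∞)) Φ := hΦ.of_le (mod_cast le_top)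
  have hv₁0 : ContDiff ℝ (↑(⊤ : ℕ∞)) v₁ := hv₁.of_le (mod_cast le_top)
  have hv₂0 : ContDiff ℝ (↑(⊤ : ℕ∞)) v₂ := hv₂.of_le (mod_cast le_top)
  have hΨ1 := key _ hΨ0; have hΨ2 := key _ hΨ1; have hΨ3 := key _ hΨ2
  have hΦ1 := key _ hΦ0; have hΦ2 := key _ hΦ1; have hΦ3 := key _ hΦ2
  have dd : ∀ f : ℝ → ℂ, ContDiff ℝ (↑(⊤ : ℕ∞)) f → ∀ x : ℝ, HasDerivAt f (deriv f x) x :=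
    fun f hf x => (hf.differentiable (by simp) x).hasDerivAt
  have h3 : ∀ f : ℝ → ℂ, iteratedDeriv 3 f = deriv (deriv (deriv f)) := by
    intro f
    simp [iteratedDeriv_succ, iteratedDeriv_zero]
  have hΨ3e : ∀ x ∈ I, deriv (deriv (deriv Ψ)) x = v₁ x * deriv Ψ x - v₂ x * Ψ x := by
    intro x hx; have := hΨode x hx; rw [h3] at this; linear_combination this
  have hΦ3e : ∀ x ∈ I, deriv (deriv (deriv Φ)) x = v₁ x * deriv Φ x - v₂ x * Φ x := by
    intro x hx; have := hΦode x hx; rw [h3] at this; linear_combination this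
  -- first derivative of W as a function
  have hdW : deriv W = fun x => Ψ x * deriv (deriv Φ) x - deriv (deriv Ψ) x * Φ x := by
    funext x
    have h : HasDerivAt W (deriv Ψ x * deriv Φ x + Ψ x * deriv (deriv Φ) x
        - (deriv (deriv Ψ) x * Φ x + deriv Ψ x * deriv Φ x)) x := by
      rw [hW]
      exact ((dd _ hΨ0 x).mul (dd _ hΦ1 x)).sub ((dd _ hΨ1 x).mul (dd _ hΦ0 x))
    rw [h.deriv]; ring
  -- second derivative of W as a function
  have hddW : deriv (deriv W) = fun x => Ψ x * deriv (deriv (deriv Φ)) x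
      + deriv Ψ x * deriv (deriv Φ) x - deriv (deriv Ψ) x * deriv Φ x
      - deriv (deriv (deriv Ψ)) x * Φ x := by
    rw [hdW]
    funext x
    have h : HasDerivAt (fun x => Ψ x * deriv (deriv Φ) x - deriv (deriv Ψ) x * Φ x)
        (deriv Ψ x * deriv (deriv Φ) x + Ψ x * deriv (deriv (deriv Φ)) x
        - (deriv (deriv (deriv Ψ)) x * Φ x + deriv (deriv Ψ) x * deriv Φ x)) x :=
      ((dd _ hΨ0 x).mul (dd _ hΦ2 x)).sub ((dd _ hΨ2 x).mul (dd _ hΦ0 x))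
    rw [h.deriv]; ring
  intro z hz
  have hzI : I ∈ nhds z := hI.mem_nhds hz
  -- fourth derivatives on I
  have hΨ4 : deriv (deriv (deriv (deriv Ψ))) z =
      deriv v₁ z * deriv Ψ z + v₁ z * deriv (deriv Ψ) z
      - (deriv v₂ z * Ψ z + v₂ z * deriv Ψ z) := by
    have he : deriv (deriv (deriv Ψ)) =ᶠ[nhds z] fun x => v₁ x * deriv Ψ x - v₂ x * Ψ x :=
      Filter.eventually_of_mem hzI (fun x hx => hΨ3e x hx)
    rw [he.deriv_eq]
    exact (((dd _ hv₁0 z).mul (dd _ hΨ1 z)).sub ((dd _ hv₂0 z).mul (dd _ hΨ0 z))).deriv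
  have hΦ4 : deriv (deriv (deriv (deriv Φ))) z =
      deriv v₁ z * deriv Φ z + v₁ z * deriv (deriv Φ) z
      - (deriv v₂ z * Φ z + v₂ z * deriv Φ z) := by
    have he : deriv (deriv (deriv Φ)) =ᶠ[nhds z] fun x => v₁ x * deriv Φ x - v₂ x * Φ x :=
      Filter.eventually_of_mem hzI (fun x hx => hΦ3e x hx)
    rw [he.deriv_eq]
    exact (((dd _ hv₁0 z).mul (dd _ hΦ1 z)).sub ((dd _ hv₂0 z).mul (dd _ hΦ0 z))).deriv
  -- third derivative of W at z
  have hW3 : iteratedDeriv 3 W z = Ψ z * deriv (deriv (deriv (deriv Φ))) z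
      + 2 * deriv Ψ z * deriv (deriv (deriv Φ)) z
      - 2 * deriv (deriv (deriv Ψ)) z * deriv Φ z
      - deriv (deriv (deriv (deriv Ψ))) z * Φ z := by
    rw [h3 W, hddW]
    have h : HasDerivAt (fun x => Ψ x * deriv (deriv (deriv Φ)) x
        + deriv Ψ x * deriv (deriv Φ) x - deriv (deriv Ψ) x * deriv Φ x
        - deriv (deriv (deriv Ψ)) x * Φ x)
        ((deriv Ψ z * deriv (deriv (deriv Φ)) z + Ψ z * deriv (deriv (deriv (deriv Φ))) z)
        + (deriv (deriv Ψ) z * deriv (deriv Φ) z + deriv Ψ z * deriv (deriv (deriv Φ)) z)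
        - (deriv (deriv (deriv Ψ)) z * deriv Φ z + deriv (deriv Ψ) z * deriv (deriv Φ) z)
        - (deriv (deriv (deriv (deriv Ψ))) z * Φ z + deriv (deriv (deriv Ψ)) z * deriv Φ z)) z :=
      ((((dd _ hΨ0 z).mul (dd _ hΦ3 z)).add ((dd _ hΨ1 z).mul (dd _ hΦ2 z))).sub
        ((dd _ hΨ2 z).mul (dd _ hΦ1 z))).sub ((dd _ hΨ3 z).mul (dd _ hΦ0 z))
    rw [h.deriv]; ring
  have e1 := hΨ3e z hz
  have e2 := hΦ3e z hz
  rw [hW3, hdW, hW, hΨ4, hΦ4]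
  simp only []
  linear_combination (2 * deriv Φ z) * e1 - (2 * deriv Ψ z) * e2
end

section
/- For the Frobenius recursion of the equation (∂³ − W₁∂ + W₂)Φ = 0 at a regular singular point with indicial polynomial P(β) = (β−3)(β−1)(β+1) (indices −1, 1, 3) and Laurent coefficients q₁m, q₂m with q₁₀ = q₂₀ = 3: the recursion for the index β = 1 admits a solution if and only if q₁₂ − q₂₂ = (2/3)q₁₁² − q₁₁q₂₁ + (1/3)q₂₁². -/
/-!
Write the index `1` recursion as `P (1 + r) Φ_r = R_r(Φ_0, …, Φ_{r-1})`. Since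
`P (1 + r) = (r - 2) r (r + 2)`, the recursion determines `Φ_1 = (q₁₁ - q₂₁) / P 2` uniquely, breaks down
at `r = 2` where `P 3 = 0`, and is again uniquely solvable for `r ≥ 3`. A solution therefore exists
iff `R_2 = (2 q₁₁ - q₂₁) Φ_1 + q₁₂ - q₂₂` vanishes, which is the stated relation.
-/

namespace Frobenius

variable {K : Type*} [Field K]

def rhs (q₁ q₂ : ℕ → K) (Φ : ℕ → K) (r : ℕ) : K :=
  ∑ m ∈ Finset.Icc 1 r, (q₁ m * Φ (r - m) * ((1 : K) + r - m) - q₂ m * Φ (r - m))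

def IsSolution (q₁ q₂ : ℕ → K) (P : K → K) (Φ : ℕ → K) : Prop :=
  Φ 0 = 1 ∧ ∀ r : ℕ, 1 ≤ r → P (1 + r) * Φ r = rhs q₁ q₂ Φ r

/-- At a resonance `P (1 + r) = 0` this sets `Φ r = 0`, since `x / 0 = 0`. -/
noncomputable def seq (q₁ q₂ : ℕ → K) (P : K → K) : ℕ → K
  | 0 => 1
  | r + 1 =>
    (∑ m ∈ (Finset.Icc 1 (r + 1)).attach,
      (q₁ m * seq q₁ q₂ P (r + 1 - m) * ((1 : K) + (r + 1 : ℕ) - m)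
        - q₂ m * seq q₁ q₂ P (r + 1 - m))) / P (1 + (r + 1 : ℕ))
  termination_by r => r
  decreasing_by
    have hm := (Finset.mem_Icc.1 m.2).1
    omega

variable (q₁ q₂ : ℕ → K) (P : K → K)

lemma seq_zero : seq q₁ q₂ P 0 = 1 := by
  rw [seq]

lemma seq_succ (r : ℕ) :
    seq q₁ q₂ P (r + 1) = rhs q₁ q₂ (seq q₁ q₂ P) (r + 1) / P (1 + (r + 1 : ℕ)) := by
  rw [seq, rhs, ← Finset.sum_attach (Finset.Icc 1 (r + 1))]

lemma rhs_one (Φ : ℕ → K) : rhs q₁ q₂ Φ 1 = (q₁ 1 - q₂ 1) * Φ 0 := by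
  simp only [rhs, Finset.Icc_self, Finset.sum_singleton, Nat.sub_self, Nat.cast_one]
  ring

lemma rhs_two (Φ : ℕ → K) :
    rhs q₁ q₂ Φ 2 = (2 * q₁ 1 - q₂ 1) * Φ 1 + (q₁ 2 - q₂ 2) * Φ 0 := by
  rw [rhs, show Finset.Icc 1 2 = {1, 2} from rfl, Finset.sum_pair (by norm_num)]
  simp only [Nat.sub_self, Nat.add_one_sub_one, Nat.cast_ofNat, Nat.cast_one]
  ring

lemma seq_one : seq q₁ q₂ P 1 = (q₁ 1 - q₂ 1) / P 2 := by
  rw [seq_succ, rhs_one, seq_zero, mul_one]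
  norm_num [one_add_one_eq_two]

lemma isSolution_seq
    (hres : ∀ r : ℕ, 1 ≤ r → P (1 + r) = 0 → rhs q₁ q₂ (seq q₁ q₂ P) r = 0) :
    IsSolution q₁ q₂ P (seq q₁ q₂ P) := by
  refine ⟨seq_zero q₁ q₂ P, fun r hr => ?_⟩
  obtain ⟨s, rfl⟩ : ∃ s, r = s + 1 := ⟨r - 1, by omega⟩
  by_cases hPr : P (1 + (s + 1 : ℕ)) = 0
  · rw [hPr, zero_mul, hres _ hr hPr]
  · rw [seq_succ, mul_div_cancel₀ _ hPr]

end Frobenius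

lemma eq_two_of_indicial_eq_zero {K : Type*} [Field K] [CharZero K] {r : ℕ} (hr : 1 ≤ r)
    (h : ((1 : K) + r - 3) * (1 + r - 1) * (1 + r + 1) = 0) : r = 2 := by
  have hfactored : ((r : K) - 2) * r * (r + 2) = 0 := by linear_combination h
  simp only [mul_eq_zero, sub_eq_zero] at hfactored
  rcases hfactored with (h2 | h0) | hneg
  · exact_mod_cast h2
  · exact absurd (Nat.cast_eq_zero.1 h0) (by omega)
  · norm_cast at hneg

theorem frobenius_index_one_solvability_general
    (q₁ q₂ : ℕ → ℂ)
    (P : ℂ → ℂ) (hP : ∀ β : ℂ, P β = (β - 3) * (β - 1) * (β + 1)) :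
    (∃ Φ : ℕ → ℂ, Φ 0 = 1 ∧
        ∀ r : ℕ, 1 ≤ r →
          P (1 + r) * Φ r =
            ∑ m ∈ Finset.Icc 1 r,
              (q₁ m * Φ (r - m) * ((1 : ℂ) + r - m) - q₂ m * Φ (r - m)))
    ↔ q₁ 2 - q₂ 2 = (2/3) * (q₁ 1)^2 - q₁ 1 * q₂ 1 + (1/3) * (q₂ 1)^2 := by
  have hP1 : P (1 + ((1 : ℕ) : ℂ)) = -3 := by rw [hP]; norm_num
  have hP2 : P 2 = -3 := by rw [hP]; norm_num
  have hP3 : P (1 + ((2 : ℕ) : ℂ)) = 0 := by rw [hP]; norm_num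
  change (∃ Φ, Frobenius.IsSolution q₁ q₂ P Φ) ↔ _
  constructor
  · rintro ⟨Φ, hΦ0, hΦ⟩
    have h1 := hΦ 1 le_rfl
    have h2 := hΦ 2 (by norm_num)
    rw [Frobenius.rhs_one, hΦ0, hP1] at h1
    rw [Frobenius.rhs_two, hΦ0, hP3] at h2
    linear_combination -h2 + ((2 * q₁ 1 - q₂ 1) / 3) * h1
  · intro h
    refine ⟨_, Frobenius.isSolution_seq q₁ q₂ P fun r hr hPr => ?_⟩
    obtain rfl := eq_two_of_indicial_eq_zero hr ((hP _).symm.trans hPr)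
    rw [Frobenius.rhs_two, Frobenius.seq_one, Frobenius.seq_zero, hP2]
    linear_combination h

/-- For the Frobenius recursion at index β = 1 of a third order equation with
indicial polynomial P(β) = (β−3)(β−1)(β+1) and Laurent coefficients q₁ₘ, q₂ₘ
(q₁₀ = q₂₀ = 3), a solution of the recursion exists if and only if
q₁₂ − q₂₂ = (2/3)q₁₁² − q₁₁q₂₁ + (1/3)q₂₁². -/
theorem frobenius_index_one_solvability
    (q₁ q₂ : ℕ → ℂ) (hq₁0 : q₁ 0 = 3) (hq₂0 : q₂ 0 = 3)
    (P : ℂ → ℂ) (hP : ∀ β : ℂ, P β = (β - 3) * (β - 1) * (β + 1)) :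
    (∃ Φ : ℕ → ℂ, Φ 0 = 1 ∧
        ∀ r : ℕ, 1 ≤ r →
          P (1 + r) * Φ r =
            ∑ m ∈ Finset.Icc 1 r,
              (q₁ m * Φ (r - m) * ((1 : ℂ) + r - m) - q₂ m * Φ (r - m)))
    ↔ q₁ 2 - q₂ 2 = (2/3) * (q₁ 1)^2 - q₁ 1 * q₂ 1 + (1/3) * (q₂ 1)^2 :=
  frobenius_index_one_solvability_general q₁ q₂ P hP
end

section
/- The affine space f + s, with f = E₂₁ + E₃₂ and s = ℂe₁ ⊕ ℂe_θ (companion matrices), is a transversal space: every element of f + b₊ is in the orbit of f + s under the unipotent group N = exp(n₊) acting by conjugation (exp y).g = Σ_{k≥0}(ad_y)^k g / k!, and for s ∈ s, (exp y).(f + s) ∈ f + s implies y = 0. -/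
/-!
For `y = !![0,x,z; 0,0,w; 0,0,0]` the operator `ad y` raises the height grading of `sl₃`, so
`(ad y)⁴` kills every companion matrix and `(exp y).(f + a e₁ + c e_θ)` is a finite sum, an
explicit matrix polynomial in `x, z, w, a, c`. It has diagonal `(x, w - x, -w)`, entry
`x w / 2 - w² - z` at position (2,3), and first row entries `a + …`, `c + …`. Read in this order
the system is triangular, which gives both surjectivity onto `f + b₊` (solve for `x, w`, then `z`,
then `a, c`) and transversality (staying in `f + s` forces `x = w = 0`, then `z = 0`).
-/

theorem tsum_inv_factorial_smul_iterate_eq_sum {𝕜 M : Type*} [DivisionRing 𝕜] [AddCommMonoid M]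
    [TopologicalSpace M] [Module 𝕜 M] {F : M → M} (hF : F 0 = 0) {g : M} {n : ℕ}
    (hn : F^[n] g = 0) :
    ∑' k : ℕ, (k.factorial : 𝕜)⁻¹ • F^[k] g =
      ∑ k ∈ Finset.range n, (k.factorial : 𝕜)⁻¹ • F^[k] g := by
  refine tsum_eq_sum fun k hk => ?_
  obtain ⟨m, rfl⟩ := Nat.exists_eq_add_of_le (not_lt.mp (Finset.mem_range.not.mp hk))
  rw [add_comm, Function.iterate_add_apply, hn, Function.iterate_fixed hF, smul_zero]

noncomputable def expAd {n R : Type*} [Fintype n] [DivisionRing R] [TopologicalSpace R]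
    (y g : Matrix n n R) : Matrix n n R :=
  ∑' k : ℕ, (k.factorial : R)⁻¹ • (fun m => y * m - m * y)^[k] g

section Companion

variable (x z w a c : ℂ)

theorem ad_iterate_one_companion :
    (fun m => !![0,x,z; 0,0,w; 0,0,0] * m - m * !![0,x,z; 0,0,w; 0,0,0])^[1]
      !![0,a,c; 1,0,0; 0,1,0] = !![x, z, -(w*a); 0, w-x, -z; 0, 0, -w] := by
  ext i j
  fin_cases i <;> fin_cases j <;> simp [mul_comm]

theorem ad_iterate_two_companion :
    (fun m => !![0,x,z; 0,0,w; 0,0,0] * m - m * !![0,x,z; 0,0,w; 0,0,0])^[2]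
      !![0,a,c; 1,0,0; 0,1,0] =
      !![0, x*w - 2*x^2, -2*z*w - 2*x*z; 0, 0, x*w - 2*w^2; 0, 0, 0] := by
  rw [Function.iterate_succ_apply', ad_iterate_one_companion]
  ext i j
  fin_cases i <;> fin_cases j <;> simp <;> ring

theorem ad_iterate_three_companion :
    (fun m => !![0,x,z; 0,0,w; 0,0,0] * m - m * !![0,x,z; 0,0,w; 0,0,0])^[3]
      !![0,a,c; 1,0,0; 0,1,0] = !![0, 0, 3*x^2*w - 3*x*w^2; 0, 0, 0; 0, 0, 0] := by
  rw [Function.iterate_succ_apply', ad_iterate_two_companion]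
  ext i j
  fin_cases i <;> fin_cases j <;> simp
  ring

theorem ad_iterate_four_companion :
    (fun m => !![0,x,z; 0,0,w; 0,0,0] * m - m * !![0,x,z; 0,0,w; 0,0,0])^[4]
      !![0,a,c; 1,0,0; 0,1,0] = 0 := by
  rw [Function.iterate_succ_apply', ad_iterate_three_companion]
  ext i j
  fin_cases i <;> fin_cases j <;> simp

theorem expAd_companion :
    expAd !![0,x,z; 0,0,w; 0,0,0] !![0,a,c; 1,0,0; 0,1,0] =
      !![x, a + z + x*w/2 - x^2, c - w*a - z*w - x*w^2/2 - x*z + x^2*w/2;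
         1, w - x, x*w/2 - w^2 - z;
         0, 1, -w] := by
  rw [expAd, tsum_inv_factorial_smul_iterate_eq_sum (by simp) (ad_iterate_four_companion ..),
    Finset.sum_range_succ, Finset.sum_range_succ, Finset.sum_range_succ, Finset.sum_range_one,
    ad_iterate_three_companion, ad_iterate_two_companion, ad_iterate_one_companion,
    Function.iterate_zero_apply]
  ext i j
  fin_cases i <;> fin_cases j <;> simp [Nat.factorial] <;> ring

end Companion

theorem exists_expAd_companion_eq (d₁ d₂ p q r : ℂ) :
    ∃ x z w a c : ℂ, expAd !![0,x,z; 0,0,w; 0,0,0] !![0,a,c; 1,0,0; 0,1,0] =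
      !![d₁, p, q; 1, d₂, r; 0, 1, -d₁-d₂] := by
  set w := d₁ + d₂
  set z := d₁*w/2 - w^2 - r
  set a := p + d₁^2 - z - d₁*w/2
  refine ⟨d₁, z, w, a, q + w*a + z*w + d₁*w^2/2 + d₁*z - d₁^2*w/2, ?_⟩
  rw [expAd_companion]
  ext i j
  fin_cases i <;> fin_cases j <;> simp [a, z, w] <;> ring

theorem eq_zero_of_expAd_companion_eq_companion {x z w a c a' c' : ℂ}
    (h : expAd !![0,x,z; 0,0,w; 0,0,0] !![0,a,c; 1,0,0; 0,1,0] = !![0,a',c'; 1,0,0; 0,1,0]) :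
    x = 0 ∧ z = 0 ∧ w = 0 := by
  rw [expAd_companion] at h
  have hx : x = 0 := by simpa using congr_fun₂ h 0 0
  have hw : w = 0 := by simpa using congr_fun₂ h 2 2
  have hz : x*w/2 - w^2 - z = 0 := by simpa using congr_fun₂ h 1 2
  exact ⟨hx, by simpa [hx, hw] using hz, hw⟩

/-- The companion-matrix affine space f + s, s = ℂe₁ ⊕ ℂe_θ, is a transversal space
for the action (exp y).g = Σ_{k≥0} (ad_y)^k g / k! of the unipotent group N = exp(n₊)
on f + b₊ in sl₃. -/
theorem companion_space_is_transversal
    (f e₁ eθ : Matrix (Fin 3) (Fin 3) ℂ)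
    (hf : f = !![0,0,0; 1,0,0; 0,1,0])
    (he₁ : e₁ = !![0,1,0; 0,0,0; 0,0,0])
    (heθ : eθ = !![0,0,1; 0,0,0; 0,0,0])
    (act : Matrix (Fin 3) (Fin 3) ℂ → Matrix (Fin 3) (Fin 3) ℂ → Matrix (Fin 3) (Fin 3) ℂ)
    (hact : ∀ y g, act y g =
      ∑' k : ℕ, ((k.factorial : ℂ)⁻¹) • ((fun m => y * m - m * y)^[k] g)) :
    -- the orbit of f + s under N covers f + b₊ :
    (∀ b : Matrix (Fin 3) (Fin 3) ℂ,
      (∃ d₁ d₂ p q r : ℂ, b = !![d₁,p,q; 0,d₂,r; 0,0,-d₁-d₂]) →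
      ∃ y : Matrix (Fin 3) (Fin 3) ℂ, (∃ p q r : ℂ, y = !![0,p,q; 0,0,r; 0,0,0]) ∧
        ∃ a c : ℂ, act y (f + a • e₁ + c • eθ) = f + b) ∧
    -- transversality: (exp y).(f + s) ∈ f + s forces y = 0 :
    (∀ y : Matrix (Fin 3) (Fin 3) ℂ, (∃ p q r : ℂ, y = !![0,p,q; 0,0,r; 0,0,0]) →
      ∀ a c : ℂ, (∃ a' c' : ℂ, act y (f + a • e₁ + c • eθ) = f + a' • e₁ + c' • eθ) →
        y = 0) := by
  have hact : act = expAd := funext₂ hact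
  have hcompanion (a c : ℂ) : f + a • e₁ + c • eθ = !![0,a,c; 1,0,0; 0,1,0] := by
    subst hf he₁ heθ
    ext i j
    fin_cases i <;> fin_cases j <;> simp
  refine ⟨?_, ?_⟩
  · rintro b ⟨d₁, d₂, p, q, r, rfl⟩
    obtain ⟨x, z, w, a, c, h⟩ := exists_expAd_companion_eq d₁ d₂ p q r
    refine ⟨_, ⟨x, z, w, rfl⟩, a, c, ?_⟩
    rw [hact, hcompanion, h, hf]
    ext i j
    fin_cases i <;> fin_cases j <;> simp
  · rintro y ⟨x, z, w, rfl⟩ a c ⟨a', c', h⟩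
    rw [hact, hcompanion, hcompanion] at h
    obtain ⟨rfl, rfl, rfl⟩ := eq_zero_of_expAd_companion_eq_companion h
    ext i j
    fin_cases i <;> fin_cases j <;> rfl
end

section
/- The matrix oper forms ∂_x + M₁ and ∂_x + M₂, where M₁ has rows (ℓ₁/x, 0, x^{3M} − E), (1, (ℓ₂−ℓ₁)/x, 0), (0, 1, −ℓ₂/x), and M₂ has rows (0, −w̃₁/x², w̃₂/x³ + x^{3M} − E), (1, 0, 0), (0, 1, 0), are gauge equivalent by an upper-triangular unipotent gauge transformation exp(y), y ∈ n₊(K), provided w̃₁ = ℓ̃₁ℓ̃₂ + ℓ̃₁ℓ̃₃ + ℓ̃₂ℓ̃₃ − 2 and w̃₂ = −ℓ̃₁ℓ̃₂ℓ̃₃ with ℓ̃₁ = −ℓ₁ + 2, ℓ̃₂ = ℓ₁ − ℓ₂ + 1, ℓ̃₃ = ℓ₂. -/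
/-!
For a unipotent `g` with entries `a, b, c` above the diagonal, the equation `g' + M₁ g = g M₂`
is six scalar equations: the diagonal ones force `a = ℓ₁/x` and `c = ℓ₂/x`, the `(1,2)` entry
then gives `b = ℓ̃₂ℓ̃₃/x²`, and the two remaining entries reduce to the polynomial identities
`w̃₁ = ℓ̃₂ℓ̃₃ + ℓ₁ - ℓ₁²` and `w̃₂ = (ℓ₁ - 2) ℓ̃₂ℓ̃₃`, which hold by the choice of `ℓ̃ᵢ`.
-/

open Matrix

theorem deriv_const_div_pow {𝕜 : Type*} [NontriviallyNormedField 𝕜] (c : 𝕜) (n : ℕ) (x : 𝕜) :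
    deriv (fun x => c / x ^ n) x = -(n * c) / x ^ (n + 1) := by
  have h : (fun x : 𝕜 => c / x ^ n) = fun x => c * x ^ (-n : ℤ) := by
    ext x; rw [_root_.zpow_neg, zpow_natCast, div_eq_mul_inv]
  rw [h, deriv_const_mul_field, deriv_zpow, show (-n : ℤ) - 1 = -(n + 1 : ℕ) by push_cast; ring,
    _root_.zpow_neg, zpow_natCast]
  push_cast
  ring

theorem unipotent_gauge_eq {R : Type*} [CommRing R] {p₁ p₂ p₃ q u v a b c a' b' c' : R}
    (h₁₁ : p₁ = a) (h₁₂ : a' + p₁ * a = u + b) (h₁₃ : b' + p₁ * b + q = v)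
    (h₂₂ : a + p₂ = c) (h₂₃ : c' + b + p₂ * c = 0) (h₃₃ : c + p₃ = 0) :
    !![0, a', b'; 0, 0, c'; 0, 0, 0]
        + !![p₁, 0, q; 1, p₂, 0; 0, 1, p₃] * !![1, a, b; 0, 1, c; 0, 0, 1]
      = !![1, a, b; 0, 1, c; 0, 0, 1] * !![0, u, v; 1, 0, 0; 0, 1, 0] := by
  rw [mul_fin_three, mul_fin_three]
  ext i j
  fin_cases i <;> fin_cases j <;> simp [← add_assoc] <;> assumption

/-- `g = !![1, a, b; 0, 1, c; 0, 0, 1]` plays the role of `exp y`, and `g' = g M₂ - M₁ g` says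
that `g` carries `∂_x + M₂` to `∂_x + M₁`. -/
theorem gauge_equivalence_bhk
    (ℓ₁ ℓ₂ M E : ℂ)
    (ℓt₁ ℓt₂ ℓt₃ w₁ w₂ : ℂ)
    (hℓt₁ : ℓt₁ = -ℓ₁ + 2) (hℓt₂ : ℓt₂ = ℓ₁ - ℓ₂ + 1) (hℓt₃ : ℓt₃ = ℓ₂)
    (hw₁ : w₁ = ℓt₁*ℓt₂ + ℓt₁*ℓt₃ + ℓt₂*ℓt₃ - 2)
    (hw₂ : w₂ = -ℓt₁*ℓt₂*ℓt₃)
    (M₁ M₂ : ℂ → Matrix (Fin 3) (Fin 3) ℂ)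
    (hM₁ : ∀ x : ℂ, M₁ x =
      !![ℓ₁/x, 0, x^(3*M) - E; 1, (ℓ₂ - ℓ₁)/x, 0; 0, 1, -ℓ₂/x])
    (hM₂ : ∀ x : ℂ, M₂ x =
      !![0, -w₁/x^2, w₂/x^3 + x^(3*M) - E; 1, 0, 0; 0, 1, 0]) :
    ∃ a b c : ℂ → ℂ,
      (∀ x : ℂ, x ≠ 0 →
        DifferentiableAt ℂ a x ∧ DifferentiableAt ℂ b x ∧ DifferentiableAt ℂ c x) ∧
      (∀ x : ℂ, x ≠ 0 →
        !![0, deriv a x, deriv b x; 0, 0, deriv c x; 0, 0, 0]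
          + M₁ x * !![1, a x, b x; 0, 1, c x; 0, 0, 1]
          = !![1, a x, b x; 0, 1, c x; 0, 0, 1] * M₂ x) := by
  have hw₁' : w₁ = ℓt₂ * ℓt₃ + ℓ₁ - ℓ₁ ^ 2 := by subst_vars; ring
  have hw₂' : w₂ = (ℓ₁ - 2) * (ℓt₂ * ℓt₃) := by subst_vars; ring
  have hℓt₂₃ : ℓt₂ * ℓt₃ = ℓ₂ * (ℓ₁ - ℓ₂ + 1) := by subst_vars; ring
  refine ⟨fun x => ℓ₁ / x, fun x => ℓt₂ * ℓt₃ / x ^ 2, fun x => ℓ₂ / x,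
    fun x hx => ⟨by fun_prop (disch := simp [hx]), by fun_prop (disch := simp [hx]),
      by fun_prop (disch := simp [hx])⟩, fun x hx => ?_⟩
  rw [hM₁, hM₂, deriv_const_div_id, deriv_const_div_pow, deriv_const_div_id]
  simp only [Nat.cast_ofNat, Nat.reduceAdd]
  refine unipotent_gauge_eq rfl ?_ ?_ (by ring) ?_ (by ring)
  · field_simp
    linear_combination hw₁'
  · field_simp
    linear_combination -hw₂'
  · field_simp
    linear_combination hℓt₂₃
end
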